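/- Let a > 0, σ > 0, Ω ∈ ℝ. Then lim_{ε→0⁺} ∫_{−∞}^∞ exp( −z²/(σ²a²) − 2iΩz/a ) / sinh²(z − iε) dz = − e^(−πΩ/a) ∫_{−∞}^∞ exp( −(r − iπ/2)²/(σ²a²) − 2iΩr/a ) / cosh²(r) dr. -/

import Mathlib

open MeasureTheory Filter
open scoped Topology

open Complex Set intervalIntegral in
private lemma horizontal_contour_shift (f : ℂ → ℂ) (c M β : ℝ) (hβ : 0 < β)
    (hd : ∀ w : ℂ, w.im ∈ Set.uIcc 0 c → DifferentiableAt ℂ f w)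
    (hbound : ∀ x y : ℝ, y ∈ Set.uIcc 0 c → ‖f (x + y * I)‖ ≤ M * Real.exp (-β * x ^ 2)) :
    (∫ x : ℝ, f (x + c * I)) = ∫ x : ℝ, f x := by
  have hmem : ∀ (x y : ℝ), y ∈ Set.uIcc 0 c → ((x : ℂ) + y * I).im ∈ Set.uIcc 0 c := by
    intro x y hy; simpa using hy
  have hcont : ∀ y ∈ Set.uIcc 0 c, Continuous fun x : ℝ => f (x + y * I) := by
    intro y hy
    have hg : Continuous fun x : ℝ => (x : ℂ) + y * I := by fun_prop
    refine continuous_iff_continuousAt.2 fun x => ?_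
    exact ContinuousAt.comp (g := f) (f := fun x : ℝ => (x : ℂ) + y * I)
      (hd _ (hmem x y hy)).continuousAt hg.continuousAt
  have hgint : Integrable (fun x : ℝ => M * Real.exp (-β * x ^ 2)) :=
    (integrable_exp_neg_mul_sq hβ).const_mul M
  have hint : ∀ y ∈ Set.uIcc 0 c, Integrable fun x : ℝ => f (x + y * I) := fun y hy =>
    hgint.mono' ((hcont y hy).aestronglyMeasurable)
      (Filter.Eventually.of_forall fun x => hbound x y hy)
  have hint0 : Integrable fun x : ℝ => f x := by
    simpa using hint 0 Set.left_mem_uIcc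
  have C : ∀ T : ℝ, (∫ x in (-T : ℝ)..T, f (x + c * I)) =
      (∫ x in (-T : ℝ)..T, f x) + (I * ∫ y in (0:ℝ)..c, f (T + y * I)) -
        I * ∫ y in (0:ℝ)..c, f (-T + y * I) := by
    intro T
    have hsub : ((Set.uIcc ((-T : ℂ)).re ((T : ℂ) + c * I).re) ×ℂ
        (Set.uIcc ((-T : ℂ)).im ((T : ℂ) + c * I).im)) ⊆ {w : ℂ | w.im ∈ Set.uIcc 0 c} := by
      intro w hw
      rw [Complex.mem_reProdIm] at hw
      simpa using hw.2
    have h := Complex.integral_boundary_rect_eq_zero_of_differentiableOn f (-T) (T + c * I)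
      (fun w hw => (hd w (hsub hw)).differentiableWithinAt)
    simp only [neg_im, ofReal_im, neg_zero, add_im, mul_im, I_im, I_re, ofReal_re,
      mul_one, mul_zero, zero_add, add_zero, neg_re, add_re, mul_re, sub_zero,
      ofReal_zero, zero_mul, smul_eq_mul, Complex.ofReal_neg] at h
    linear_combination -h
  have hexp : Tendsto (fun T : ℝ => M * Real.exp (-β * T ^ 2) * |c|) atTop (𝓝 0) := by
    have h1 : Tendsto (fun T : ℝ => -β * T ^ 2) atTop atBot := by
      simp_rw [neg_mul]
      exact tendsto_neg_atTop_atBot.comp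
        ((tendsto_const_mul_atTop_of_pos hβ).mpr (tendsto_pow_atTop two_ne_zero))
    have h2 := Real.tendsto_exp_atBot.comp h1
    simpa using (h2.const_mul M).mul_const |c|
  have vb : ∀ x : ℝ, ‖I * ∫ y in (0:ℝ)..c, f (x + y * I)‖ ≤ M * Real.exp (-β * x ^ 2) * |c| := by
    intro x
    rw [norm_mul, Complex.norm_I, one_mul]
    have := intervalIntegral.norm_integral_le_of_norm_le_const
      (C := M * Real.exp (-β * x ^ 2)) (f := fun y : ℝ => f (x + y * I)) (a := (0:ℝ)) (b := c)
      (fun y hy => hbound x y (Set.uIoc_subset_uIcc hy))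
    simpa using this
  have hV1 : Tendsto (fun T : ℝ => I * ∫ y in (0:ℝ)..c, f (T + y * I)) atTop (𝓝 0) :=
    squeeze_zero_norm (fun T => vb T) hexp
  have hV2 : Tendsto (fun T : ℝ => I * ∫ y in (0:ℝ)..c, f (-T + y * I)) atTop (𝓝 0) := by
    refine squeeze_zero_norm (fun T => ?_) hexp
    simpa [neg_sq] using vb (-T)
  refine tendsto_nhds_unique
    (intervalIntegral_tendsto_integral (hint c Set.right_mem_uIcc)
      tendsto_neg_atTop_atBot tendsto_id) ?_
  have hfun : (fun T : ℝ => ∫ x in (-T : ℝ)..T, f (x + c * I)) =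
      fun T => (∫ x in (-T : ℝ)..T, f x) + (I * ∫ y in (0:ℝ)..c, f (T + y * I)) -
        I * ∫ y in (0:ℝ)..c, f (-T + y * I) := funext C
  simp only [id_eq]
  rw [hfun]
  have h0 : Tendsto (fun T : ℝ => ∫ x in (-T : ℝ)..T, f x) atTop (𝓝 (∫ x : ℝ, f x)) :=
    intervalIntegral_tendsto_integral hint0 tendsto_neg_atTop_atBot tendsto_id
  simpa using (h0.add hV1).sub hV2

private noncomputable def Eaux (σ a Ω : ℝ) : ℂ → ℂ :=
  fun w => Complex.exp (-w ^ 2 / ((σ : ℂ) ^ 2 * (a : ℂ) ^ 2) - 2 * Complex.I * Ω * w / a)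

private lemma Eaux_differentiable (σ a Ω : ℝ) : Differentiable ℂ (Eaux σ a Ω) := by
  unfold Eaux
  exact (((differentiable_pow 2).neg.div_const _).sub
    ((differentiable_id.const_mul _).div_const _)).cexp

private lemma Eaux_continuous (σ a Ω : ℝ) : Continuous (Eaux σ a Ω) :=
  (Eaux_differentiable σ a Ω).continuous

private lemma sinh_decomp (x t : ℝ) : Complex.sinh (x + t * Complex.I)
    = ((Real.sinh x * Real.cos t : ℝ) : ℂ) + ((Real.cosh x * Real.sin t : ℝ) : ℂ) * Complex.I := by
  rw [Complex.sinh_add, Complex.sinh_mul_I, Complex.cosh_mul_I]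
  push_cast
  ring

private lemma sinh_norm_sq_lb (x t : ℝ) :
    Real.sin t ^ 2 ≤ ‖Complex.sinh ((x : ℂ) + (t : ℂ) * Complex.I)‖ ^ 2 := by
  rw [sinh_decomp, Complex.sq_norm, Complex.normSq_add_mul_I]
  have h1 : (0:ℝ) ≤ Real.cosh x ^ 2 - 1 := by nlinarith [Real.one_le_cosh x]
  nlinarith [mul_nonneg h1 (sq_nonneg (Real.sin t)), sq_nonneg (Real.sinh x * Real.cos t)]

/-- Contour-deformation identity for the uniformly accelerated detector response in
two-dimensional Minkowski vacuum:
`lim_{ε→0⁺} ∫_{−∞}^∞ exp(−z²/(σ²a²) − 2iΩz/a)/sinh²(z−iε) dz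
  = −e^{−πΩ/a} ∫_{−∞}^∞ exp(−(r−iπ/2)²/(σ²a²) − 2iΩr/a)/cosh²(r) dr`. -/
theorem accelerated_response_contour_deformation (a σ Ω : ℝ) (ha : 0 < a) (hσ : 0 < σ) :
    Tendsto (fun ε : ℝ =>
        ∫ z : ℝ, Complex.exp (-(z : ℂ) ^ 2 / ((σ : ℂ) ^ 2 * (a : ℂ) ^ 2)
            - 2 * Complex.I * Ω * z / a) /
          (Complex.sinh ((z : ℂ) - Complex.I * ε)) ^ 2)
      (𝓝[>] 0)
      (𝓝 (-Complex.exp (-(Real.pi : ℂ) * Ω / a) *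
        ∫ r : ℝ, Complex.exp (-((r : ℂ) - Complex.I * Real.pi / 2) ^ 2 /
            ((σ : ℂ) ^ 2 * (a : ℂ) ^ 2) - 2 * Complex.I * Ω * r / a) /
          ((Real.cosh r : ℂ)) ^ 2)) := by
  have hπ := Real.pi_pos
  obtain ⟨β, hβdef⟩ : ∃ β : ℝ, β = (σ ^ 2 * a ^ 2)⁻¹ := ⟨_, rfl⟩
  have hβ : (0:ℝ) < β := by rw [hβdef]; positivity
  obtain ⟨K, hKdef⟩ : ∃ K : ℝ, K = Real.exp (Real.pi ^ 2 / 4 * β + Real.pi * |Ω| / a) := ⟨_, rfl⟩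
  have hK : 0 < K := by rw [hKdef]; exact Real.exp_pos _
  -- norm of Eaux
  have hEnorm : ∀ x y : ℝ, ‖Eaux σ a Ω ((x : ℂ) + (y : ℂ) * Complex.I)‖
      = Real.exp ((y ^ 2 - x ^ 2) * β + 2 * Ω * y / a) := by
    intro x y
    have harg : (-((x : ℂ) + (y : ℂ) * Complex.I) ^ 2 / ((σ : ℂ) ^ 2 * (a : ℂ) ^ 2)
          - 2 * Complex.I * (Ω : ℂ) * ((x : ℂ) + (y : ℂ) * Complex.I) / (a : ℂ))
        = (((y ^ 2 - x ^ 2) * β + 2 * Ω * y / a : ℝ) : ℂ)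
          + ((-(2 * x * y) * β - 2 * Ω * x / a : ℝ) : ℂ) * Complex.I := by
      rw [hβdef]
      have ha' : (a:ℂ) ≠ 0 := Complex.ofReal_ne_zero.mpr ha.ne'
      have hσ' : (σ:ℂ) ≠ 0 := Complex.ofReal_ne_zero.mpr hσ.ne'
      push_cast
      linear_combination (-(y:ℂ) ^ 2 * (((σ:ℂ) ^ 2 * (a:ℂ) ^ 2))⁻¹ - 2 * (Ω:ℂ) * (y:ℂ) / (a:ℂ)) *
        Complex.I_sq
    unfold Eaux
    rw [harg, Complex.norm_exp]
    simp only [Complex.add_re, Complex.ofReal_re, Complex.mul_re, Complex.I_re, Complex.I_im,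
      Complex.ofReal_im, mul_zero, zero_mul, mul_one, sub_zero, add_zero]
  have hEbound : ∀ x y : ℝ, -(Real.pi / 2) ≤ y → y ≤ 0 →
      ‖Eaux σ a Ω ((x : ℂ) + (y : ℂ) * Complex.I)‖ ≤ K * Real.exp (-β * x ^ 2) := by
    intro x y hy1 hy2
    rw [hEnorm, hKdef, ← Real.exp_add, Real.exp_le_exp]
    have h1 : y ^ 2 ≤ Real.pi ^ 2 / 4 := by nlinarith
    have h2 : 2 * Ω * y ≤ Real.pi * |Ω| := by
      have := le_abs_self (Ω * y)
      rw [abs_mul, abs_of_nonpos hy2] at this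
      nlinarith [abs_nonneg Ω]
    have h3 : (0:ℝ) < a⁻¹ := by positivity
    rw [div_eq_mul_inv (2 * Ω * y) a, div_eq_mul_inv (Real.pi * |Ω|) a]
    nlinarith [mul_le_mul_of_nonneg_right h1 hβ.le, mul_le_mul_of_nonneg_right h2 h3.le]
  -- the key contour-shift identity for fixed ε ∈ (0, π/2)
  have key : ∀ ε : ℝ, ε ∈ Set.Ioo 0 (Real.pi / 2) →
      (∫ z : ℝ, Complex.exp (-(z : ℂ) ^ 2 / ((σ : ℂ) ^ 2 * (a : ℂ) ^ 2)
            - 2 * Complex.I * Ω * z / a) /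
          (Complex.sinh ((z : ℂ) - Complex.I * ε)) ^ 2)
        = - ∫ x : ℝ, Eaux σ a Ω ((x : ℂ) + ((ε - Real.pi / 2 : ℝ) : ℂ) * Complex.I) /
            ((Real.cosh x : ℂ)) ^ 2 := by
    rintro ε ⟨hε0, hεπ⟩
    have hsinε : 0 < Real.sin ε := Real.sin_pos_of_pos_of_lt_pi hε0 (by linarith)
    have hsin_bd : ∀ t : ℝ, -(Real.pi / 2) ≤ t → t ≤ -ε → Real.sin ε ^ 2 ≤ Real.sin t ^ 2 := by
      intro t h1 h2
      have h3 : Real.sin t ≤ Real.sin (-ε) :=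
        Real.sin_le_sin_of_le_of_le_pi_div_two h1 (by linarith) h2
      rw [Real.sin_neg] at h3
      nlinarith
    have hc0 : ε - Real.pi / 2 ≤ 0 := by linarith
    have huIcc : Set.uIcc (0:ℝ) (ε - Real.pi / 2) = Set.Icc (ε - Real.pi / 2) 0 :=
      Set.uIcc_of_ge hc0
    have hne : ∀ w : ℂ, w.im ∈ Set.uIcc 0 (ε - Real.pi / 2) →
        Complex.sinh (w - Complex.I * ε) ≠ 0 := by
      intro w hw
      rw [huIcc, Set.mem_Icc] at hw
      have hwrw : w - Complex.I * ε = (w.re : ℂ) + ((w.im - ε : ℝ) : ℂ) * Complex.I := by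
        apply Complex.ext <;> simp
      rw [hwrw]
      intro h0
      have hlb := sinh_norm_sq_lb w.re (w.im - ε)
      rw [h0] at hlb
      simp only [norm_zero] at hlb
      have := hsin_bd (w.im - ε) (by linarith [hw.1]) (by linarith [hw.2])
      nlinarith
    have hd : ∀ w : ℂ, w.im ∈ Set.uIcc 0 (ε - Real.pi / 2) → DifferentiableAt ℂ
        (fun w => Eaux σ a Ω w / (Complex.sinh (w - Complex.I * ε)) ^ 2) w := by
      intro w hw
      refine DifferentiableAt.div ((Eaux_differentiable σ a Ω) w) ?_ (pow_ne_zero 2 (hne w hw))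
      exact ((Complex.differentiable_sinh.comp (differentiable_id.sub_const _)).pow 2) w
    have hbound : ∀ x y : ℝ, y ∈ Set.uIcc 0 (ε - Real.pi / 2) →
        ‖(fun w => Eaux σ a Ω w / (Complex.sinh (w - Complex.I * ε)) ^ 2)
            ((x : ℂ) + (y : ℂ) * Complex.I)‖
          ≤ (K / Real.sin ε ^ 2) * Real.exp (-β * x ^ 2) := by
      intro x y hy
      rw [huIcc, Set.mem_Icc] at hy
      have hwrw : ((x : ℂ) + (y : ℂ) * Complex.I - Complex.I * ε)
          = (x : ℂ) + ((y - ε : ℝ) : ℂ) * Complex.I := by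
        push_cast; ring
      simp only
      rw [norm_div, hwrw]
      have hnum : ‖Eaux σ a Ω ((x : ℂ) + (y : ℂ) * Complex.I)‖ ≤ K * Real.exp (-β * x ^ 2) :=
        hEbound x y (by linarith [hy.1]) hy.2
      have hden : Real.sin ε ^ 2 ≤ ‖(Complex.sinh ((x : ℂ) + ((y - ε : ℝ) : ℂ) * Complex.I)) ^ 2‖ := by
        rw [norm_pow]
        exact (hsin_bd (y - ε) (by linarith [hy.1]) (by linarith [hy.2])).trans
          (sinh_norm_sq_lb x (y - ε))
      calc ‖Eaux σ a Ω ((x : ℂ) + (y : ℂ) * Complex.I)‖ /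
            ‖(Complex.sinh ((x : ℂ) + ((y - ε : ℝ) : ℂ) * Complex.I)) ^ 2‖
          ≤ (K * Real.exp (-β * x ^ 2)) / (Real.sin ε ^ 2) :=
            div_le_div₀ (by positivity) hnum (by positivity) hden
        _ = (K / Real.sin ε ^ 2) * Real.exp (-β * x ^ 2) := by ring
    have hshift := horizontal_contour_shift
      (fun w => Eaux σ a Ω w / (Complex.sinh (w - Complex.I * ε)) ^ 2)
      (ε - Real.pi / 2) (K / Real.sin ε ^ 2) β hβ hd hbound
    have h2 : ∀ x : ℝ, Eaux σ a Ω ((x : ℂ) + ((ε - Real.pi / 2 : ℝ) : ℂ) * Complex.I) /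
          (Complex.sinh (((x : ℂ) + ((ε - Real.pi / 2 : ℝ) : ℂ) * Complex.I) - Complex.I * ε)) ^ 2
        = -(Eaux σ a Ω ((x : ℂ) + ((ε - Real.pi / 2 : ℝ) : ℂ) * Complex.I) /
            ((Real.cosh x : ℂ)) ^ 2) := by
      intro x
      have hwrw : ((x : ℂ) + ((ε - Real.pi / 2 : ℝ) : ℂ) * Complex.I - Complex.I * ε)
          = (x : ℂ) + ((-(Real.pi / 2) : ℝ) : ℂ) * Complex.I := by
        push_cast; ring
      have hden : (Complex.sinh (((x : ℂ) + ((ε - Real.pi / 2 : ℝ) : ℂ) * Complex.I)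
            - Complex.I * ε)) ^ 2 = -((Real.cosh x : ℂ)) ^ 2 := by
        rw [hwrw, sinh_decomp, Real.cos_neg, Real.cos_pi_div_two, Real.sin_neg,
          Real.sin_pi_div_two]
        push_cast
        linear_combination (Complex.cosh (x:ℂ)) ^ 2 * Complex.I_sq
      rw [hden, div_neg]
    calc (∫ z : ℝ, Complex.exp (-(z : ℂ) ^ 2 / ((σ : ℂ) ^ 2 * (a : ℂ) ^ 2)
            - 2 * Complex.I * Ω * z / a) / (Complex.sinh ((z : ℂ) - Complex.I * ε)) ^ 2)
        = ∫ x : ℝ, (fun w => Eaux σ a Ω w / (Complex.sinh (w - Complex.I * ε)) ^ 2) (x : ℂ) := by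
          simp only [Eaux]
      _ = ∫ x : ℝ, (fun w => Eaux σ a Ω w / (Complex.sinh (w - Complex.I * ε)) ^ 2)
            ((x : ℂ) + ((ε - Real.pi / 2 : ℝ) : ℂ) * Complex.I) := hshift.symm
      _ = ∫ x : ℝ, -(Eaux σ a Ω ((x : ℂ) + ((ε - Real.pi / 2 : ℝ) : ℂ) * Complex.I) /
            ((Real.cosh x : ℂ)) ^ 2) := by simp_rw [h2]
      _ = - ∫ x : ℝ, Eaux σ a Ω ((x : ℂ) + ((ε - Real.pi / 2 : ℝ) : ℂ) * Complex.I) /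
            ((Real.cosh x : ℂ)) ^ 2 := integral_neg _
  -- dominated convergence as ε → 0⁺
  have hlim : Tendsto (fun ε : ℝ =>
      ∫ x : ℝ, Eaux σ a Ω ((x : ℂ) + ((ε - Real.pi / 2 : ℝ) : ℂ) * Complex.I) /
        ((Real.cosh x : ℂ)) ^ 2)
      (𝓝[>] 0)
      (𝓝 (∫ x : ℝ, Eaux σ a Ω ((x : ℂ) + (((0:ℝ) - Real.pi / 2 : ℝ) : ℂ) * Complex.I) /
        ((Real.cosh x : ℂ)) ^ 2)) := by
    apply MeasureTheory.tendsto_integral_filter_of_dominated_convergence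
      (bound := fun x : ℝ => K * Real.exp (-β * x ^ 2))
    · refine Filter.Eventually.of_forall fun ε => Continuous.aestronglyMeasurable ?_
      refine Continuous.div ((Eaux_continuous σ a Ω).comp (by fun_prop)) (by fun_prop) ?_
      intro x
      exact pow_ne_zero 2 (Complex.ofReal_ne_zero.mpr (Real.cosh_pos x).ne')
    · filter_upwards [Ioo_mem_nhdsGT (by linarith : (0:ℝ) < Real.pi / 2)] with ε hε
      refine Filter.Eventually.of_forall fun x => ?_
      rw [norm_div]
      have h1 : ‖Eaux σ a Ω ((x : ℂ) + ((ε - Real.pi / 2 : ℝ) : ℂ) * Complex.I)‖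
          ≤ K * Real.exp (-β * x ^ 2) :=
        hEbound x _ (by linarith [hε.1]) (by linarith [hε.2])
      have h2 : (1:ℝ) ≤ ‖((Real.cosh x : ℂ)) ^ 2‖ := by
        rw [norm_pow, Complex.norm_real, Real.norm_eq_abs, abs_of_pos (Real.cosh_pos x)]
        nlinarith [Real.one_le_cosh x]
      calc ‖Eaux σ a Ω ((x : ℂ) + ((ε - Real.pi / 2 : ℝ) : ℂ) * Complex.I)‖ /
            ‖((Real.cosh x : ℂ)) ^ 2‖
          ≤ ‖Eaux σ a Ω ((x : ℂ) + ((ε - Real.pi / 2 : ℝ) : ℂ) * Complex.I)‖ :=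
            div_le_self (norm_nonneg _) h2
        _ ≤ K * Real.exp (-β * x ^ 2) := h1
    · exact (integrable_exp_neg_mul_sq hβ).const_mul K
    · refine Filter.Eventually.of_forall fun x => ?_
      have hcont : Continuous (fun ε : ℝ =>
          Eaux σ a Ω ((x : ℂ) + ((ε - Real.pi / 2 : ℝ) : ℂ) * Complex.I) /
            ((Real.cosh x : ℂ)) ^ 2) := by
        apply Continuous.div_const
        exact (Eaux_continuous σ a Ω).comp (by fun_prop)
      exact hcont.continuousAt.tendsto.mono_left nhdsWithin_le_nhds
  -- identify the limit with the stated value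
  have hfinal : -(∫ x : ℝ, Eaux σ a Ω ((x : ℂ) + (((0:ℝ) - Real.pi / 2 : ℝ) : ℂ) * Complex.I) /
        ((Real.cosh x : ℂ)) ^ 2)
      = -Complex.exp (-(Real.pi : ℂ) * Ω / a) *
        ∫ r : ℝ, Complex.exp (-((r : ℂ) - Complex.I * Real.pi / 2) ^ 2 /
            ((σ : ℂ) ^ 2 * (a : ℂ) ^ 2) - 2 * Complex.I * Ω * r / a) /
          ((Real.cosh r : ℂ)) ^ 2 := by
    rw [neg_mul]
    congr 1
    have hpt : ∀ x : ℝ, Eaux σ a Ω ((x : ℂ) + (((0:ℝ) - Real.pi / 2 : ℝ) : ℂ) * Complex.I) /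
          ((Real.cosh x : ℂ)) ^ 2
        = Complex.exp (-(Real.pi : ℂ) * Ω / a) *
          (Complex.exp (-((x : ℂ) - Complex.I * Real.pi / 2) ^ 2 /
            ((σ : ℂ) ^ 2 * (a : ℂ) ^ 2) - 2 * Complex.I * Ω * x / a) /
            ((Real.cosh x : ℂ)) ^ 2) := by
      intro x
      unfold Eaux
      rw [← mul_div_assoc, ← Complex.exp_add]
      congr 2
      push_cast
      linear_combination ((Real.pi : ℂ) * Ω / a) * Complex.I_sq
    simp_rw [hpt]
    rw [MeasureTheory.integral_const_mul]
  have H := hlim.neg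
  rw [hfinal] at H
  refine Filter.Tendsto.congr' ?_ H
  filter_upwards [Ioo_mem_nhdsGT (by linarith : (0:ℝ) < Real.pi / 2)] with ε hε
  exact (key ε hε).symm
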